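/- Let G : [0,∞) → (0,∞) be continuous with t^{n+r} G(t) decreasing on (1,∞) and tending to 0 at ∞, and let μ be a positive Radon measure supported in B(x₀,1) with μ(B(x₀,ε)) = o(ε^{n+r}) and ∫ |x−x₀|^{−n−r} dμ < ∞. Then lim_{ε→0⁺} ε^{−n−r} ∫_{ℝⁿ} G(|x−x₀|/ε) dμ(x) = 0. -/

import Mathlib

/-!
Fix `A > 1`. On the ball of radius `A ε` the kernel `G (|x - x₀| / ε)` is at most `max G` over
`[0, A]`; outside it, monotonicity of `t ^ p G t` gives
`G (|x - x₀| / ε) ≤ A ^ p G A ε ^ p |x - x₀| ^ (-p)`. Hence `ε ^ (-p) ∫ G (|x - x₀| / ε) dμ` is at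
most a multiple of `μ (B(x₀, A ε)) / (A ε) ^ p`, which tends to `0`, plus
`A ^ p G A ∫ |x - x₀| ^ (-p) dμ`. So the upper limit is bounded by the latter for every `A`, and
it tends to `0` as `A → ∞`.
-/

open MeasureTheory Metric Filter Topology

lemma tendsto_zero_of_forall_eventually_le_add {α : Type*} {l : Filter α} {f : α → ℝ} {b : ℝ → ℝ}
    (hb : Tendsto b atTop (𝓝 0)) (hf : ∀ᶠ x in l, 0 ≤ f x)
    (hfb : ∀ᶠ A in atTop, ∀ δ > 0, ∀ᶠ x in l, f x ≤ δ + b A) :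
    Tendsto f l (𝓝 0) := by
  refine tendsto_order.2 ⟨fun a ha => hf.mono fun x hx => ha.trans_le hx, fun a ha => ?_⟩
  obtain ⟨A, hfA, hbA⟩ := (hfb.and (hb.eventually (gt_mem_nhds (half_pos ha)))).exists
  filter_upwards [hfA (a / 2) (half_pos ha)] with x hx
  linarith

lemma le_div_pow_of_antitoneOn_pow_mul {g : ℝ → ℝ} {p : ℕ}
    (hg : AntitoneOn (fun t => t ^ p * g t) (Set.Ioi 1)) {A t : ℝ} (hA : 1 < A) (hAt : A ≤ t) :
    g t ≤ A ^ p * g A / t ^ p := by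
  have ht : 0 < t := by linarith
  rw [le_div_iff₀ (by positivity), mul_comm]
  exact hg hA (hA.trans_le hAt) hAt

section Kernel

variable {X : Type*} [PseudoMetricSpace X] {x₀ : X} {G : ℝ → ℝ} {p : ℕ}

lemma kernel_le_indicator_add (hG : ∀ t ≥ 0, 0 ≤ G t)
    (hGdec : AntitoneOn (fun t => t ^ p * G t) (Set.Ioi 1)) {A ε M : ℝ} (hA : 1 < A)
    (hε : 0 < ε) (hM : ∀ t ∈ Set.Icc 0 A, G t ≤ M) (x : X) :
    G (dist x x₀ / ε) ≤
      (ball x₀ (A * ε)).indicator (fun _ => M) x + A ^ p * G A * ε ^ p * dist x x₀ ^ (-(p : ℝ)) := by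
  have hfar : 0 ≤ A ^ p * G A * ε ^ p * dist x x₀ ^ (-(p : ℝ)) := by
    have := hG A (by linarith)
    positivity
  by_cases hx : x ∈ ball x₀ (A * ε)
  · rw [Set.indicator_of_mem hx]
    refine (hM _ ⟨by positivity, ?_⟩).trans (le_add_of_nonneg_right hfar)
    exact (div_le_iff₀ hε).2 (mem_ball.1 hx).le
  · rw [Set.indicator_of_notMem hx, zero_add]
    have hAx : A * ε ≤ dist x x₀ := not_lt.1 hx
    have hx₀ : 0 < dist x x₀ := (mul_pos (by linarith) hε).trans_le hAx
    calc G (dist x x₀ / ε) ≤ A ^ p * G A / (dist x x₀ / ε) ^ p :=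
          le_div_pow_of_antitoneOn_pow_mul hGdec hA ((le_div_iff₀ hε).2 hAx)
      _ = A ^ p * G A * ε ^ p * dist x x₀ ^ (-(p : ℝ)) := by
          rw [Real.rpow_neg hx₀.le, Real.rpow_natCast, div_pow]
          field_simp

variable [MeasurableSpace X] [OpensMeasurableSpace X] {μ : Measure X} [IsFiniteMeasure μ]

lemma rpow_neg_mul_integral_kernel_le (hG : ∀ t ≥ 0, 0 ≤ G t)
    (hGdec : AntitoneOn (fun t => t ^ p * G t) (Set.Ioi 1))
    (hinteg : Integrable (fun x => dist x x₀ ^ (-(p : ℝ))) μ) {A ε M : ℝ} (hA : 1 < A)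
    (hε : 0 < ε) (hM : ∀ t ∈ Set.Icc 0 A, G t ≤ M) :
    ε ^ (-(p : ℝ)) * ∫ x, G (dist x x₀ / ε) ∂μ ≤
      M * A ^ p * (μ.real (ball x₀ (A * ε)) / (A * ε) ^ p) +
        A ^ p * G A * ∫ x, dist x x₀ ^ (-(p : ℝ)) ∂μ := by
  have hball : Integrable ((ball x₀ (A * ε)).indicator fun _ => M) μ :=
    (integrable_const M).indicator measurableSet_ball
  have hint : ∫ x, G (dist x x₀ / ε) ∂μ ≤
      μ.real (ball x₀ (A * ε)) * M + A ^ p * G A * ε ^ p * ∫ x, dist x x₀ ^ (-(p : ℝ)) ∂μ := by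
    calc ∫ x, G (dist x x₀ / ε) ∂μ
        ≤ ∫ x, ((ball x₀ (A * ε)).indicator (fun _ => M) x +
            A ^ p * G A * ε ^ p * dist x x₀ ^ (-(p : ℝ))) ∂μ :=
          integral_mono_of_nonneg (.of_forall fun x => hG _ (by positivity))
            (hball.add (hinteg.const_mul _))
            (.of_forall (kernel_le_indicator_add hG hGdec hA hε hM))
      _ = _ := by
          rw [integral_add hball (hinteg.const_mul _), integral_indicator_const _ measurableSet_ball,
            integral_const_mul, smul_eq_mul]
  have hεp : ε ^ (-(p : ℝ)) = (ε ^ p)⁻¹ := by rw [Real.rpow_neg hε.le, Real.rpow_natCast]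
  have hA₀ : 0 < A := by linarith
  calc ε ^ (-(p : ℝ)) * ∫ x, G (dist x x₀ / ε) ∂μ
      ≤ (ε ^ p)⁻¹ * (μ.real (ball x₀ (A * ε)) * M +
          A ^ p * G A * ε ^ p * ∫ x, dist x x₀ ^ (-(p : ℝ)) ∂μ) := by
        rw [hεp]; gcongr
    _ = _ := by
        rw [mul_pow]
        field_simp

theorem tendsto_rpow_neg_mul_integral_kernel_zero (hGc : Continuous G) (hG : ∀ t ≥ 0, 0 ≤ G t)
    (hGdec : AntitoneOn (fun t => t ^ p * G t) (Set.Ioi 1))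
    (hGlim : Tendsto (fun t => t ^ p * G t) atTop (𝓝 0))
    (hsmall : Tendsto (fun ε : ℝ => μ.real (ball x₀ ε) / ε ^ p) (𝓝[>] 0) (𝓝 0))
    (hinteg : Integrable (fun x => dist x x₀ ^ (-(p : ℝ))) μ) :
    Tendsto (fun ε : ℝ => ε ^ (-(p : ℝ)) * ∫ x, G (dist x x₀ / ε) ∂μ) (𝓝[>] 0) (𝓝 0) := by
  refine tendsto_zero_of_forall_eventually_le_add
    (b := fun A => A ^ p * G A * ∫ x, dist x x₀ ^ (-(p : ℝ)) ∂μ)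
    (by simpa using hGlim.mul_const (∫ x, dist x x₀ ^ (-(p : ℝ)) ∂μ)) ?_ ?_
  · filter_upwards [self_mem_nhdsWithin] with ε (hε : 0 < ε)
    exact mul_nonneg (Real.rpow_nonneg hε.le _)
      (integral_nonneg fun x => hG _ (by positivity))
  · filter_upwards [eventually_gt_atTop 1] with A hA δ hδ
    obtain ⟨M, hM⟩ := (isCompact_Icc (a := 0) (b := A)).bddAbove_image hGc.continuousOn
    have hnear : Tendsto (fun ε => M * A ^ p * (μ.real (ball x₀ (A * ε)) / (A * ε) ^ p))
        (𝓝[>] 0) (𝓝 0) := by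
      have hscale : Tendsto (A * ·) (𝓝[>] (0 : ℝ)) (𝓝[>] 0) :=
        tendsto_iff_comap.2 (comap_mulLeft_nhdsGT_zero (by linarith)).ge
      simpa using (hsmall.comp hscale).const_mul (M * A ^ p)
    filter_upwards [hnear.eventually (gt_mem_nhds hδ), self_mem_nhdsWithin]
      with ε hεδ (hε : 0 < ε)
    have := rpow_neg_mul_integral_kernel_le hG hGdec hinteg hA hε
      (fun t ht => hM (Set.mem_image_of_mem G ht))
    linarith

end Kernel

theorem kernel_integral_tendsto_zero_general (n r : ℕ) (G : ℝ → ℝ) (hGc : Continuous G)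
    (hGpos : ∀ t ≥ (0:ℝ), 0 < G t)
    (hGdec : AntitoneOn (fun t => t ^ (n + r) * G t) (Set.Ioi 1))
    (hGlim : Tendsto (fun t => t ^ (n + r) * G t) atTop (𝓝 0))
    (μ : Measure (EuclideanSpace ℝ (Fin n))) [IsFiniteMeasure μ]
    (x₀ : EuclideanSpace ℝ (Fin n))
    (hsmall : Tendsto (fun ε : ℝ => (μ (ball x₀ ε)).toReal / ε ^ (n + r)) (𝓝[>] 0) (𝓝 0))
    (hinteg : Integrable (fun x => ‖x - x₀‖ ^ (-((n : ℝ) + r))) μ) :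
    Tendsto (fun ε : ℝ => ε ^ (-((n : ℝ) + r)) * ∫ x, G (‖x - x₀‖ / ε) ∂μ)
      (𝓝[>] 0) (𝓝 0) := by
  rw [show -((n : ℝ) + r) = -((n + r : ℕ) : ℝ) by push_cast; rfl] at hinteg ⊢
  simp_rw [← dist_eq_norm] at hinteg ⊢
  exact tendsto_rpow_neg_mul_integral_kernel_zero hGc (fun t ht => (hGpos t ht).le) hGdec hGlim
    hsmall hinteg

theorem kernel_integral_tendsto_zero (n r : ℕ) (G : ℝ → ℝ) (hGc : Continuous G)
    (hGpos : ∀ t ≥ (0:ℝ), 0 < G t)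
    (hGdec : AntitoneOn (fun t => t ^ (n + r) * G t) (Set.Ioi 1))
    (hGlim : Tendsto (fun t => t ^ (n + r) * G t) atTop (𝓝 0))
    (μ : Measure (EuclideanSpace ℝ (Fin n))) [IsFiniteMeasure μ]
    (x₀ : EuclideanSpace ℝ (Fin n))
    (hsupp : μ (closedBall x₀ 1)ᶜ = 0) (hpt : μ {x₀} = 0)
    (hsmall : Tendsto (fun ε : ℝ => (μ (ball x₀ ε)).toReal / ε ^ (n + r)) (𝓝[>] 0) (𝓝 0))
    (hinteg : Integrable (fun x => ‖x - x₀‖ ^ (-((n : ℝ) + r))) μ) :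
    Tendsto (fun ε : ℝ => ε ^ (-((n : ℝ) + r)) * ∫ x, G (‖x - x₀‖ / ε) ∂μ)
      (𝓝[>] 0) (𝓝 0) :=
  kernel_integral_tendsto_zero_general n r G hGc hGpos hGdec hGlim μ x₀ hsmall hinteg
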